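/- Let f be an operation defined by a set S of standard rules admitting a definitional tree T, together with a single default rule r of the form f x1 ... xk = t with distinct variables x1,...,xk. Let R be the replacement of r, consisting of the rules obtained by instantiating r with the patterns of the exempt nodes of T. Then for any ground f-rooted pattern p and any term q: p is reduced at the root to q by the default rule r (i.e., no rule of S matches p, and q is the corresponding instance of t) if and only if p is reduced at the root to q by some rule of R. -/

import Mathlib

/-!  A formalization of constructor-based term rewriting with definitional
trees, following Antoy's definitions.  Constructor and operation symbols are
natural numbers (disjoint by construction, since terms distinguish them);
constructors are grouped into types via `ctorType`. -/

/-- A signature: constructors (with type, arity and argument types) and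
operations (with arity, argument types and result type). -/
structure Sig where
  ctorType : ℕ → ℕ
  ctorArity : ℕ → ℕ
  ctorArgTy : ℕ → ℕ → ℕ
  opArity : ℕ → ℕ
  opArgTy : ℕ → ℕ → ℕ
  opResTy : ℕ → ℕ

namespace FLP

/-- Terms: variables (name and type annotation), constructor applications and
operation applications. -/
inductive Tm where
  | var : ℕ → ℕ → Tm
  | con : ℕ → List Tm → Tm
  | op  : ℕ → List Tm → Tm

/-- A substitution maps a variable (name and type) to a term. -/
def Subst := ℕ → ℕ → Tm

/-- Applying a substitution to a term. -/
def applySubst (σ : Subst) : Tm → Tm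
  | .var v ty => σ v ty
  | .con c ts => .con c (ts.attach.map fun t => applySubst σ t.1)
  | .op f ts  => .op f (ts.attach.map fun t => applySubst σ t.1)
decreasing_by
  all_goals (have h := List.sizeOf_lt_of_mem t.2; simp at h ⊢; omega)

/-- The list of variables (name, type) occurring in a term. -/
def varsOf : Tm → List (ℕ × ℕ)
  | .var v ty => [(v, ty)]
  | .con _ ts => ts.attach.flatMap fun t => varsOf t.1
  | .op _ ts  => ts.attach.flatMap fun t => varsOf t.1
decreasing_by
  all_goals (have h := List.sizeOf_lt_of_mem t.2; simp at h ⊢; omega)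

/-- Ground terms: terms without variables. -/
inductive Ground : Tm → Prop
  | con : ∀ c ts, (∀ t ∈ ts, Ground t) → Ground (.con c ts)
  | op  : ∀ f ts, (∀ t ∈ ts, Ground t) → Ground (.op f ts)

/-- Constructor terms: built from variables and constructor symbols only. -/
inductive CTerm : Tm → Prop
  | var : ∀ v ty, CTerm (.var v ty)
  | con : ∀ c ts, (∀ t ∈ ts, CTerm t) → CTerm (.con c ts)

/-- The typing judgment for terms. -/
inductive HasTy (S : Sig) : Tm → ℕ → Prop
  | var : ∀ v ty, HasTy S (.var v ty) ty
  | con : ∀ c ts, ts.length = S.ctorArity c →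
      (∀ i (h : i < ts.length), HasTy S ts[i] (S.ctorArgTy c i)) →
      HasTy S (.con c ts) (S.ctorType c)
  | op : ∀ f ts, ts.length = S.opArity f →
      (∀ i (h : i < ts.length), HasTy S ts[i] (S.opArgTy f i)) →
      HasTy S (.op f ts) (S.opResTy f)

/-- An `f`-rooted pattern: a linear, well-typed term `f t1 ... tn` whose
arguments are constructor terms. -/
def IsPat (S : Sig) (f : ℕ) (p : Tm) : Prop :=
  (∃ ts, p = .op f ts ∧ ∀ t ∈ ts, CTerm t) ∧
  ((varsOf p).map Prod.fst).Nodup ∧ HasTy S p (S.opResTy f)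

/-- A ground `f`-rooted pattern. -/
def IsGroundPat (S : Sig) (f : ℕ) (p : Tm) : Prop :=
  IsPat S f p ∧ Ground p

/-- `q` matches `p` iff `p` is a substitution instance of `q`. -/
def Matches (q p : Tm) : Prop := ∃ σ : Subst, applySubst σ q = p

/-- `q` unifies with `e` iff they have a common instance. -/
def Unifies (q e : Tm) : Prop :=
  ∃ σ τ : Subst, applySubst σ q = applySubst τ e

/-- The substitution replacing the variable named `x` by `t`. -/
def single (x : ℕ) (t : Tm) : Subst := fun v ty =>
  if v = x then t else .var v ty

/-- The substitution mapping the variables named by `xs` to the corresponding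
terms of `ts`. -/
def substOf (xs : List ℕ) (ts : List Tm) : Subst := fun v ty =>
  match xs.findIdx? (· = v) with
  | some i => ts.getD i (.var v ty)
  | none => .var v ty

/-- Partial definitional trees: rule nodes `rule(p = r)`, exempt nodes
`exempt(p)`, and branch nodes storing their pattern, the name of the
inductive variable, and one (constructor, subtree) pair per constructor of
the type of the inductive variable. -/
inductive DTree where
  | rule : Tm → Tm → DTree
  | exempt : Tm → DTree
  | branch : Tm → ℕ → List (ℕ × DTree) → DTree

/-- The pattern of the root node of a partial definitional tree. -/
def DTree.pat : DTree → Tm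
  | .rule p _ => p
  | .exempt p => p
  | .branch p _ _ => p

/-- The patterns of the leaves of a partial definitional tree. -/
def DTree.leafPats : DTree → List Tm
  | .rule p _ => [p]
  | .exempt p => [p]
  | .branch _ _ cs => cs.attach.flatMap fun ct => ct.1.2.leafPats
decreasing_by
  all_goals (obtain ⟨⟨c', T'⟩, hm⟩ := ct;
             have h := List.sizeOf_lt_of_mem hm; simp at h ⊢; omega)

/-- The patterns (left-hand sides) of the rule nodes. -/
def DTree.rulePats : DTree → List Tm
  | .rule p _ => [p]
  | .exempt _ => []
  | .branch _ _ cs => cs.attach.flatMap fun ct => ct.1.2.rulePats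
decreasing_by
  all_goals (obtain ⟨⟨c', T'⟩, hm⟩ := ct;
             have h := List.sizeOf_lt_of_mem hm; simp at h ⊢; omega)

/-- The patterns of the exempt nodes. -/
def DTree.exemptPats : DTree → List Tm
  | .rule _ _ => []
  | .exempt p => [p]
  | .branch _ _ cs => cs.attach.flatMap fun ct => ct.1.2.exemptPats
decreasing_by
  all_goals (obtain ⟨⟨c', T'⟩, hm⟩ := ct;
             have h := List.sizeOf_lt_of_mem hm; simp at h ⊢; omega)

/-- The rules contained in the rule nodes. -/
def DTree.rules : DTree → List (Tm × Tm)
  | .rule p r => [(p, r)]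
  | .exempt _ => []
  | .branch _ _ cs => cs.attach.flatMap fun ct => ct.1.2.rules
decreasing_by
  all_goals (obtain ⟨⟨c', T'⟩, hm⟩ := ct;
             have h := List.sizeOf_lt_of_mem hm; simp at h ⊢; omega)

/-- Well-formed partial definitional trees w.r.t. a signature: at a branch
node with pattern `p` and inductive variable `x` (of type `ty`, occurring in
`p`), there is exactly one child per constructor `c` of type `ty`, whose
pattern is obtained from `p` by substituting `x` with `c` applied to fresh
pairwise distinct variables. -/
inductive WF (S : Sig) : DTree → Prop
  | rule : ∀ p r, WF S (.rule p r)
  | exempt : ∀ p, WF S (.exempt p)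
  | branch : ∀ p x ty (cs : List (ℕ × DTree)),
      (x, ty) ∈ varsOf p →
      (cs.map Prod.fst).Nodup →
      (∀ c, c ∈ cs.map Prod.fst ↔ S.ctorType c = ty) →
      (∀ ct ∈ cs, ∃ fresh : List (ℕ × ℕ),
          (fresh.map Prod.fst).Nodup ∧
          fresh.length = S.ctorArity ct.1 ∧
          (∀ i (h : i < fresh.length), fresh[i].2 = S.ctorArgTy ct.1 i) ∧
          (∀ v ∈ fresh, v.1 ∉ (varsOf p).map Prod.fst) ∧
          (Prod.snd ct).pat =
            applySubst (single x (.con ct.1 (fresh.map fun v => Tm.var v.1 v.2))) p) →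
      (∀ ct ∈ cs, WF S (Prod.snd ct)) →
      WF S (.branch p x cs)

/-- A definitional tree of the operation `f`: a well-formed partial
definitional tree whose root pattern is `f x1 ... xn` with pairwise distinct
(appropriately typed) variables. -/
def IsDTreeOf (S : Sig) (f : ℕ) (T : DTree) : Prop :=
  WF S T ∧
  ∃ xs : List (ℕ × ℕ),
    (xs.map Prod.fst).Nodup ∧
    xs.length = S.opArity f ∧
    (∀ i (h : i < xs.length), xs[i].2 = S.opArgTy f i) ∧
    T.pat = .op f (xs.map fun v => Tm.var v.1 v.2)

/-- `Subtree N T` : `N` is a node (subtree) of `T`. -/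
inductive Subtree : DTree → DTree → Prop
  | refl : ∀ T, Subtree T T
  | branch : ∀ p x cs ct N, ct ∈ cs → Subtree N (Prod.snd ct) →
      Subtree N (.branch p x cs)

/-- A tree has a rule node (somewhere, including its root). -/
inductive HasRule : DTree → Prop
  | rule : ∀ p r, HasRule (.rule p r)
  | branch : ∀ p x cs ct, ct ∈ cs → HasRule (Prod.snd ct) →
      HasRule (.branch p x cs)

/-- A definitional tree is minimal iff there is some rule node below any
branch node of the tree. -/
def Minimal (T : DTree) : Prop :=
  ∀ p x cs, Subtree (.branch p x cs) T → HasRule (.branch p x cs)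

/-! Every leaf pattern of a definitional tree is an instance of its root pattern, and the leaves
partition the ground instances of the root: going down a branch node, the constructor at the root of
the value bound to the inductive variable selects exactly one child. So a ground pattern matched by
no rule node is matched by exactly one exempt node, and composing that match with the instantiation
of the exempt pattern turns the instance of the default rule into an instance of the replacement
rule, and conversely. -/

@[elab_as_elim]
theorem Tm.ind {P : Tm → Prop}
    (var : ∀ v ty, P (.var v ty))
    (con : ∀ c ts, (∀ t ∈ ts, P t) → P (.con c ts))
    (op : ∀ f ts, (∀ t ∈ ts, P t) → P (.op f ts)) : ∀ t, P t
  | .var v ty => var v ty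
  | .con c ts => con c ts fun u _ => Tm.ind var con op u
  | .op f ts => op f ts fun u _ => Tm.ind var con op u
decreasing_by
  all_goals (have h := List.sizeOf_lt_of_mem ‹_ ∈ ts›; simp at h ⊢; omega)

@[simp] theorem applySubst_var (σ : Subst) (v ty : ℕ) : applySubst σ (.var v ty) = σ v ty := by
  rw [applySubst]

@[simp] theorem applySubst_con (σ : Subst) (c : ℕ) (ts : List Tm) :
    applySubst σ (.con c ts) = .con c (ts.map (applySubst σ)) := by
  rw [applySubst, List.attach_map_val]

@[simp] theorem applySubst_op (σ : Subst) (f : ℕ) (ts : List Tm) :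
    applySubst σ (.op f ts) = .op f (ts.map (applySubst σ)) := by
  rw [applySubst, List.attach_map_val]

@[simp] theorem varsOf_var (v ty : ℕ) : varsOf (.var v ty) = [(v, ty)] := by
  rw [varsOf]

@[simp] theorem varsOf_con (c : ℕ) (ts : List Tm) : varsOf (.con c ts) = ts.flatMap varsOf := by
  rw [varsOf, List.flatMap, List.flatMap, List.attach_map_val]

@[simp] theorem varsOf_op (f : ℕ) (ts : List Tm) : varsOf (.op f ts) = ts.flatMap varsOf := by
  rw [varsOf, List.flatMap, List.flatMap, List.attach_map_val]

theorem varsOf_map_var (xs : List (ℕ × ℕ)) :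
    (xs.map fun v => Tm.var v.1 v.2).flatMap varsOf = xs := by
  simp [List.flatMap_map]

theorem applySubst_eq_applySubst_iff {σ τ : Subst} {u : Tm} :
    applySubst σ u = applySubst τ u ↔ ∀ v ∈ varsOf u, σ v.1 v.2 = τ v.1 v.2 := by
  induction u using Tm.ind with
  | var v ty => simp
  | con c ts ih =>
    simp only [applySubst_con, Tm.con.injEq, true_and, List.map_inj_left, varsOf_con,
      List.mem_flatMap]
    exact ⟨fun h v ⟨t, ht, hv⟩ => (ih t ht).1 (h t ht) v hv,
      fun h t ht => (ih t ht).2 fun v hv => h v ⟨t, ht, hv⟩⟩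
  | op f ts ih =>
    simp only [applySubst_op, Tm.op.injEq, true_and, List.map_inj_left, varsOf_op,
      List.mem_flatMap]
    exact ⟨fun h v ⟨t, ht, hv⟩ => (ih t ht).1 (h t ht) v hv,
      fun h t ht => (ih t ht).2 fun v hv => h v ⟨t, ht, hv⟩⟩

def Subst.comp (σ τ : Subst) : Subst := fun v ty => applySubst σ (τ v ty)

@[simp] theorem Subst.comp_apply (σ τ : Subst) (v ty : ℕ) :
    σ.comp τ v ty = applySubst σ (τ v ty) := rfl

theorem applySubst_applySubst (σ τ : Subst) (u : Tm) :
    applySubst σ (applySubst τ u) = applySubst (σ.comp τ) u := by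
  induction u using Tm.ind with
  | var v ty => simp
  | con c ts ih => simpa using List.map_congr_left ih
  | op f ts ih => simpa using List.map_congr_left ih

theorem varsOf_applySubst (σ : Subst) (u : Tm) :
    varsOf (applySubst σ u) = (varsOf u).flatMap fun v => varsOf (σ v.1 v.2) := by
  induction u using Tm.ind with
  | var v ty => simp
  | con c ts ih => simpa [List.flatMap_map, List.flatMap_assoc] using List.flatMap_congr ih
  | op f ts ih => simpa [List.flatMap_map, List.flatMap_assoc] using List.flatMap_congr ih

def Subst.id : Subst := Tm.var

@[simp] theorem Subst.id_apply (v ty : ℕ) : Subst.id v ty = .var v ty := rfl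

theorem applySubst_id (u : Tm) : applySubst Subst.id u = u := by
  induction u using Tm.ind with
  | var v ty => simp
  | con c ts ih => simpa using List.map_congr_left ih
  | op f ts ih => simpa using List.map_congr_left ih

theorem Matches.refl (u : Tm) : Matches u u := ⟨Subst.id, applySubst_id u⟩

theorem Matches.trans {a b c : Tm} : Matches a b → Matches b c → Matches a c := by
  rintro ⟨σ, rfl⟩ ⟨τ, rfl⟩
  exact ⟨τ.comp σ, (applySubst_applySubst τ σ a).symm⟩

theorem substOf_getElem {ns : List ℕ} (hns : ns.Nodup) {ts : List Tm} {i : ℕ}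
    (hi : i < ns.length) (hts : ts.length = ns.length) (ty : ℕ) :
    substOf ns ts ns[i] ty = ts[i] := by
  have hfind : ns.findIdx? (· = ns[i]) = some i :=
    List.findIdx?_eq_some_iff_getElem.2
      ⟨hi, by simp, fun j hj => by simp [hns.getElem_inj_iff]; omega⟩
  simp only [substOf, hfind]
  exact List.getD_eq_getElem _ _ (by omega)

theorem applySubst_substOf_of_varsOf_subset {xs : List (ℕ × ℕ)} (hxs : (xs.map Prod.fst).Nodup)
    (μ : Subst) {t : Tm} (ht : ∀ v ∈ varsOf t, v ∈ xs) :
    applySubst (substOf (xs.map Prod.fst) (xs.map fun v => μ v.1 v.2)) t = applySubst μ t := by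
  refine applySubst_eq_applySubst_iff.2 fun v hv => ?_
  obtain ⟨i, hi, rfl⟩ := List.getElem_of_mem (ht v hv)
  have h := substOf_getElem (ts := xs.map fun v => μ v.1 v.2) hxs (by simpa using hi)
    (by simp) xs[i].2
  simpa only [List.getElem_map] using h

def Subst.override (σ : Subst) (ns : List ℕ) (ts : List Tm) : Subst := fun v ty =>
  if v ∈ ns then substOf ns ts v ty else σ v ty

theorem Subst.override_of_not_mem (σ : Subst) {ns : List ℕ} (ts : List Tm) {v : ℕ} (hv : v ∉ ns)
    (ty : ℕ) : σ.override ns ts v ty = σ v ty := by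
  simp [Subst.override, hv]

theorem Subst.override_getElem (σ : Subst) {ns : List ℕ} (hns : ns.Nodup) {ts : List Tm} {i : ℕ}
    (hi : i < ns.length) (hts : ts.length = ns.length) (ty : ℕ) :
    σ.override ns ts ns[i] ty = ts[i] := by
  simp [Subst.override, substOf_getElem hns hi hts]

theorem mem_varsOf_applySubst_single {x : ℕ} {u p : Tm} {v : ℕ × ℕ}
    (hv : v ∈ varsOf (applySubst (single x u) p)) :
    v ∈ varsOf u ∨ (v ∈ varsOf p ∧ v.1 ≠ x) := by
  rw [varsOf_applySubst, List.mem_flatMap] at hv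
  obtain ⟨w, hw, hvw⟩ := hv
  by_cases hwx : w.1 = x
  · simp only [single, hwx, if_true] at hvw
    exact .inl hvw
  · simp only [single, hwx, if_false, varsOf_var, List.mem_singleton] at hvw
    exact .inr ⟨hvw ▸ hw, hvw ▸ hwx⟩

theorem applySubst_applySubst_single {σ σ' : Subst} {x : ℕ} {u p : Tm}
    (hx : ∀ v ∈ varsOf p, v.1 = x → applySubst σ' u = σ v.1 v.2)
    (hne : ∀ v ∈ varsOf p, v.1 ≠ x → σ' v.1 v.2 = σ v.1 v.2) :
    applySubst σ' (applySubst (single x u) p) = applySubst σ p := by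
  rw [applySubst_applySubst, applySubst_eq_applySubst_iff]
  intro v hv
  by_cases hvx : v.1 = x
  · simpa [single, hvx] using hx v hv hvx
  · simpa [single, hvx] using hne v hv hvx

theorem injOn_fst_varsOf_applySubst_single {x : ℕ} {u p : Tm}
    (hp : Set.InjOn Prod.fst {v | v ∈ varsOf p}) (hu : Set.InjOn Prod.fst {v | v ∈ varsOf u})
    (hdisj : ∀ v ∈ varsOf u, v.1 ∉ (varsOf p).map Prod.fst) :
    Set.InjOn Prod.fst {v | v ∈ varsOf (applySubst (single x u) p)} := by
  have hunion : Set.InjOn Prod.fst ({v | v ∈ varsOf u} ∪ {v | v ∈ varsOf p}) := by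
    refine (Set.injOn_union ?_).2 ⟨hu, hp, ?_⟩
    · exact Set.disjoint_left.2 fun v hvu hvp => hdisj v hvu (List.mem_map_of_mem hvp)
    · exact fun v hvu w hwp hvw => hdisj v hvu (hvw ▸ List.mem_map_of_mem hwp)
  refine hunion.mono fun v hv => ?_
  rcases mem_varsOf_applySubst_single hv with h | h
  exacts [.inl h, .inr h.1]

def IsValue (S : Sig) (u : Tm) (ty : ℕ) : Prop :=
  Ground u ∧ CTerm u ∧ HasTy S u ty

theorem IsValue.exists_eq_con {S : Sig} {u : Tm} {ty : ℕ} (h : IsValue S u ty) :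
    ∃ c ts, u = .con c ts ∧ S.ctorType c = ty ∧ ts.length = S.ctorArity c ∧
      ∀ i (hi : i < ts.length), IsValue S ts[i] (S.ctorArgTy c i) := by
  obtain ⟨hg, hc, hty⟩ := h
  cases hc with
  | var => cases hg
  | con c ts hcs =>
    cases hg with
    | con _ _ hgs =>
      cases hty with
      | con _ _ hlen htys =>
        exact ⟨c, ts, rfl, rfl, hlen, fun i hi =>
          ⟨hgs _ (List.getElem_mem hi), hcs _ (List.getElem_mem hi), htys i hi⟩⟩

def IsValueSubst (S : Sig) (σ : Subst) (p : Tm) : Prop :=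
  ∀ v ∈ varsOf p, IsValue S (σ v.1 v.2) v.2

/- `single` looks at variable names only: injectivity of `Prod.fst` on the variables of `p` is
what makes `single x` replace exactly the variable `(x, ty)`. -/
theorem IsValueSubst.exists_refine {S : Sig} {σ : Subst} {p : Tm} {x ty c : ℕ} {ts : List Tm}
    {fresh : List (ℕ × ℕ)} (hσ : IsValueSubst S σ p) (hinj : Set.InjOn Prod.fst {v | v ∈ varsOf p})
    (hx : (x, ty) ∈ varsOf p) (hσx : σ x ty = .con c ts)
    (hfn : (fresh.map Prod.fst).Nodup) (hflen : fresh.length = S.ctorArity c)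
    (hfty : ∀ i (h : i < fresh.length), fresh[i].2 = S.ctorArgTy c i)
    (hdisj : ∀ v ∈ fresh, v.1 ∉ (varsOf p).map Prod.fst) :
    ∃ σ' : Subst,
      applySubst σ' (applySubst (single x (.con c (fresh.map fun v => Tm.var v.1 v.2))) p) =
        applySubst σ p ∧
      IsValueSubst S σ' (applySubst (single x (.con c (fresh.map fun v => Tm.var v.1 v.2))) p) := by
  obtain ⟨c', ts', hcts, -, hlen, hval⟩ := (hσ _ hx).exists_eq_con
  rw [hσx, Tm.con.injEq] at hcts
  obtain ⟨rfl, rfl⟩ := hcts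
  set σ' := σ.override (fresh.map Prod.fst) ts
  have hlen' : ts.length = (fresh.map Prod.fst).length := by simp [hlen, hflen]
  have hfresh : ∀ i (h : i < fresh.length), σ' fresh[i].1 fresh[i].2 = ts[i]'(by omega) := by
    intro i h
    have h' := σ.override_getElem hfn (i := i) (by simpa using h) hlen' fresh[i].2
    rwa [List.getElem_map] at h'
  have hold : ∀ v ∈ varsOf p, σ' v.1 v.2 = σ v.1 v.2 := fun v hv =>
    σ.override_of_not_mem ts (fun hmem => by
      obtain ⟨w, hw, hwv⟩ := List.mem_map.1 hmem
      exact hdisj w hw (hwv ▸ List.mem_map_of_mem hv)) _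
  refine ⟨σ', applySubst_applySubst_single (fun v hv hvx => ?_) (fun v hv _ => hold v hv), ?_⟩
  · obtain rfl : v = (x, ty) := hinj hv hx hvx
    simp only [applySubst_con, List.map_map, hσx, Tm.con.injEq, true_and]
    exact List.ext_getElem (by simp [hlen, hflen]) fun i h _ => by
      simpa using hfresh i (by simpa using h)
  · intro v hv
    rcases mem_varsOf_applySubst_single hv with hvf | ⟨hvp, -⟩
    · rw [varsOf_con, varsOf_map_var] at hvf
      obtain ⟨i, hi, rfl⟩ := List.getElem_of_mem hvf
      rw [hfresh i hi, hfty i hi]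
      exact hval i (by omega)
    · rw [hold v hvp]
      exact hσ v hvp

namespace DTree

theorem mem_leafPats_branch {l p : Tm} {x : ℕ} {cs : List (ℕ × DTree)} :
    l ∈ (branch p x cs).leafPats ↔ ∃ ct ∈ cs, l ∈ ct.2.leafPats := by
  simp [leafPats]

theorem mem_rulePats_branch {l p : Tm} {x : ℕ} {cs : List (ℕ × DTree)} :
    l ∈ (branch p x cs).rulePats ↔ ∃ ct ∈ cs, l ∈ ct.2.rulePats := by
  simp [rulePats]

theorem mem_exemptPats_branch {l p : Tm} {x : ℕ} {cs : List (ℕ × DTree)} :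
    l ∈ (branch p x cs).exemptPats ↔ ∃ ct ∈ cs, l ∈ ct.2.exemptPats := by
  simp [exemptPats]

theorem mem_leafPats_iff {l : Tm} :
    ∀ N : DTree, l ∈ N.leafPats ↔ l ∈ N.rulePats ∨ l ∈ N.exemptPats
  | rule p r => by simp [leafPats, rulePats, exemptPats]
  | exempt p => by simp [leafPats, rulePats, exemptPats]
  | branch p x cs => by
    have ih : ∀ ct ∈ cs, (l ∈ ct.2.leafPats ↔ l ∈ ct.2.rulePats ∨ l ∈ ct.2.exemptPats) :=
      fun ct _ => mem_leafPats_iff ct.2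
    simp only [mem_leafPats_branch, mem_rulePats_branch, mem_exemptPats_branch]
    grind
decreasing_by
  obtain ⟨c, N⟩ := ct
  have h := List.sizeOf_lt_of_mem ‹_ ∈ cs›
  simp at h ⊢
  omega

end DTree

namespace WF

variable {S : Sig} {N : DTree}

theorem matches_of_mem_leafPats (hw : WF S N) {l : Tm} (hl : l ∈ N.leafPats) :
    Matches N.pat l := by
  induction hw with
  | rule p r | exempt p =>
    simp only [DTree.leafPats, List.mem_singleton] at hl
    exact hl ▸ Matches.refl p
  | branch p x ty cs hx hnd hiff hfr hwf ih =>
    obtain ⟨ct, hct, hl⟩ := DTree.mem_leafPats_branch.1 hl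
    obtain ⟨_, -, -, -, -, hpat⟩ := hfr ct hct
    exact Matches.trans ⟨_, hpat.symm⟩ (ih ct hct hl)

theorem exists_mem_leafPats_matches (hw : WF S N) {σ : Subst} (hσ : IsValueSubst S σ N.pat)
    (hinj : Set.InjOn Prod.fst {v | v ∈ varsOf N.pat}) :
    ∃ l ∈ N.leafPats, Matches l (applySubst σ N.pat) := by
  induction hw generalizing σ with
  | rule p r | exempt p => exact ⟨p, by simp [DTree.leafPats], σ, rfl⟩
  | branch p x ty cs hx hnd hiff hfr hwf ih =>
    dsimp only [DTree.pat] at hσ hinj ⊢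
    obtain ⟨c, ts, hσx, hcty, -, -⟩ := (hσ _ hx).exists_eq_con
    obtain ⟨ct, hct, rfl⟩ := List.mem_map.1 ((hiff c).2 hcty)
    obtain ⟨fresh, hfn, hflen, hfty, hdisj, hpat⟩ := hfr ct hct
    obtain ⟨σ', hσ'p, hσ'⟩ := hσ.exists_refine hinj hx hσx hfn hflen hfty hdisj
    have hinj' : Set.InjOn Prod.fst {v | v ∈ varsOf ct.2.pat} := by
      rw [hpat]
      refine injOn_fst_varsOf_applySubst_single hinj ?_ ?_
      · rw [varsOf_con, varsOf_map_var]
        exact fun a ha b hb => List.inj_on_of_nodup_map hfn ha hb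
      · simpa only [varsOf_con, varsOf_map_var] using hdisj
    rw [← hpat] at hσ'p hσ'
    obtain ⟨l, hl, hm⟩ := ih ct hct hσ' hinj'
    exact ⟨l, DTree.mem_leafPats_branch.2 ⟨ct, hct, hl⟩, hσ'p ▸ hm⟩

theorem not_matches_of_mem_rulePats (hw : WF S N) {P l e : Tm} (he : e ∈ N.exemptPats)
    (hme : Matches e P) (hl : l ∈ N.rulePats) : ¬ Matches l P := by
  intro hml
  induction hw with
  | rule p r => simp [DTree.exemptPats] at he
  | exempt p => simp [DTree.rulePats] at hl
  | branch p x ty cs hx hnd hiff hfr hwf ih =>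
    obtain ⟨ct₁, hct₁, hl⟩ := DTree.mem_rulePats_branch.1 hl
    obtain ⟨ct₂, hct₂, he⟩ := DTree.mem_exemptPats_branch.1 he
    obtain ⟨_, -, -, -, -, hpat₁⟩ := hfr ct₁ hct₁
    obtain ⟨_, -, -, -, -, hpat₂⟩ := hfr ct₂ hct₂
    obtain ⟨ρ₁, hρ₁⟩ := ((hwf ct₁ hct₁).matches_of_mem_leafPats
      ((DTree.mem_leafPats_iff _).2 (.inl hl))).trans hml
    obtain ⟨ρ₂, hρ₂⟩ := ((hwf ct₂ hct₂).matches_of_mem_leafPats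
      ((DTree.mem_leafPats_iff _).2 (.inr he))).trans hme
    rw [hpat₁, applySubst_applySubst] at hρ₁
    rw [hpat₂, applySubst_applySubst] at hρ₂
    have hxval := applySubst_eq_applySubst_iff.1 (hρ₁.trans hρ₂.symm) (x, ty) hx
    simp only [Subst.comp_apply, single, if_true, applySubst_con, Tm.con.injEq] at hxval
    obtain rfl : ct₁ = ct₂ := List.inj_on_of_nodup_map hnd hct₁ hct₂ hxval.1
    exact ih ct₁ hct₁ he hl

end WF

theorem IsGroundPat.isValueSubst {S : Sig} {f : ℕ} {p : Tm} {xs : List (ℕ × ℕ)} {σ : Subst}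
    (hp : IsGroundPat S f p) (hxs : ∀ i (h : i < xs.length), xs[i].2 = S.opArgTy f i)
    (hσ : applySubst σ (.op f (xs.map fun v => Tm.var v.1 v.2)) = p) :
    IsValueSubst S σ (.op f (xs.map fun v => Tm.var v.1 v.2)) := by
  obtain ⟨⟨⟨ps, rfl, hpc⟩, -, hpty⟩, hpg⟩ := hp
  simp only [applySubst_op, List.map_map, Tm.op.injEq, true_and] at hσ
  cases hpty with | op _ _ hlen hpty => ?_
  cases hpg with | op _ _ hpg => ?_
  intro v hv
  rw [varsOf_op, varsOf_map_var] at hv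
  obtain ⟨i, hi, rfl⟩ := List.getElem_of_mem hv
  have hi' : i < ps.length := by simp [← hσ, hi]
  have hσi : σ xs[i].1 xs[i].2 = ps[i] := by simp [← hσ]
  rw [hσi, hxs i hi]
  exact ⟨hpg _ (List.getElem_mem hi'), hpc _ (List.getElem_mem hi'), hpty i hi'⟩

/-- Correctness of the replacement: a ground `f`-rooted pattern
`p` is reduced at the root to `q` by the default rule `f x1...xk = t` (i.e.,
no standard rule pattern of the definitional tree `T` matches `p` and `q` is
the corresponding instance of `t`) iff `p` is reduced at the root to `q` by
some replacement rule, i.e., by the instance of the default rule by the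
substitution determined by the pattern of some exempt node of `T`. -/
theorem replacement_correct (S : Sig) (f : ℕ) (T : DTree)
    (hT : IsDTreeOf S f T)
    (xs : List (ℕ × ℕ)) (t : Tm)
    (hroot : T.pat = .op f (xs.map fun v => Tm.var v.1 v.2))
    (hvars : ∀ v ∈ varsOf t, v ∈ xs)
    (p q : Tm) (hp : IsGroundPat S f p) :
    ((∀ l ∈ T.rulePats, ¬ Matches l p) ∧
      ∃ σ : Subst, applySubst σ T.pat = p ∧ q = applySubst σ t)
    ↔
    (∃ ep ∈ T.exemptPats, ∃ us, ep = .op f us ∧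
      ∃ σ : Subst, applySubst σ ep = p ∧
        q = applySubst σ (applySubst (substOf (xs.map Prod.fst) us) t)) := by
  obtain ⟨hw, xs', hnd, -, hty, hroot'⟩ := hT
  obtain rfl : xs = xs' := by
    rw [hroot, Tm.op.injEq] at hroot'
    exact (List.map_inj_right fun a b h => by simpa [Prod.ext_iff] using h).1 hroot'.2
  have hvT : varsOf T.pat = xs := by rw [hroot, varsOf_op, varsOf_map_var]
  have hinj : Set.InjOn Prod.fst {v | v ∈ varsOf T.pat} :=
    fun a ha b hb => List.inj_on_of_nodup_map hnd (hvT ▸ ha) (hvT ▸ hb)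
  have hval : ∀ σ, applySubst σ T.pat = p → IsValueSubst S σ T.pat :=
    fun σ hσ => hroot ▸ hp.isValueSubst hty (hroot ▸ hσ)
  constructor
  · rintro ⟨hnorule, σ, hσ, rfl⟩
    obtain ⟨l, hl, τ, hτ⟩ := hw.exists_mem_leafPats_matches (hval σ hσ) hinj
    rw [hσ] at hτ
    have hle : l ∈ T.exemptPats :=
      ((DTree.mem_leafPats_iff T).1 hl).resolve_left fun hr => hnorule l hr ⟨τ, hτ⟩
    obtain ⟨μ, rfl⟩ := hw.matches_of_mem_leafPats hl
    refine ⟨_, hle, xs.map fun v => μ v.1 v.2, by simp [hroot], τ, hτ, ?_⟩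
    have hagree := applySubst_eq_applySubst_iff.1
      ((applySubst_applySubst τ μ T.pat).symm.trans (hτ.trans hσ.symm))
    rw [applySubst_substOf_of_varsOf_subset hnd μ hvars, applySubst_applySubst,
      applySubst_eq_applySubst_iff]
    exact fun v hv => (hagree v (hvT ▸ hvars v hv)).symm
  · rintro ⟨ep, hep, us, hus, τ, hτ, rfl⟩
    obtain ⟨μ, rfl⟩ := hw.matches_of_mem_leafPats ((DTree.mem_leafPats_iff T).2 (.inr hep))
    obtain rfl : us = xs.map fun v => μ v.1 v.2 := by
      simpa [hroot, Function.comp_def] using hus.symm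
    refine ⟨fun l hl => hw.not_matches_of_mem_rulePats hep ⟨τ, hτ⟩ hl, τ.comp μ,
      by rw [← applySubst_applySubst, hτ], ?_⟩
    rw [applySubst_substOf_of_varsOf_subset hnd μ hvars, applySubst_applySubst]

end FLP
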